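/- Let $X$ be the completion of $C[0,2]$ in the norm $|\|f\|| = \sup_n \frac{1}{n!}\max_{t \in \varphi^{-n}(0)}|f(t)|$, and let $A$ extend $f \mapsto f\circ\varphi$. Then the spectrum of $A$ is $\{0,1\}$, and $1$ is an eigenvalue of $A$ with one-dimensional eigenspace spanned by the constant function $\mathbb{1}$. -/

import Mathlib

/-!
On the dense image of `C[0,2]` the operator `A` fixes `𝟙` and shrinks every `g` with `g 0 = 0`
by the factor `1/k!` after `k` steps: `φᵏ` maps `φ⁻⁽ⁿ⁾(0)` into `φ⁻⁽ⁿ⁻ᵏ⁾(0)` (and onto `0` once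
`k ≥ n`), while the weight `1/n!` of the norm becomes `1/(n-k)!`, and `k! (n-k)! ≤ n!`.
Hence `Aᵏ` is Cauchy in operator norm, with limit a projection `Q` onto `ℝ 𝟙` satisfying
`A Q = Q A = Q` and `‖Aᵏ - Q‖ ≤ 2/k!`. Writing `A = (A - Q) + Q` with `(A - Q) Q = 0`, the
first summand is quasinilpotent since `(A - Q)ᵏ = Aᵏ - Q`, so `σ(A) ⊆ {0} ∪ σ(Q) ⊆ {0, 1}`.
Conversely `A` kills `max(t - 1, 0) ≠ 0` because `φ ≤ 1`, and a fixed point `x` of `A`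
satisfies `x = Q x ∈ ℝ 𝟙`.
-/

/-- The tent map on `[0,1]`. -/
noncomputable def psi0 (t : ℝ) : ℝ := if t ≤ 1 / 2 then 2 * t else 2 - 2 * t

/-- The iterated tent map `ψ : [0,1] → [0,1]`: `ψ 0 = 0` and
`ψ t = 2⁻ⁿ ψ₀(2ⁿ t - 1)` for `t ∈ [2⁻ⁿ, 2⁻ⁿ⁺¹]` (here `n = -⌊log₂ t⌋`). -/
noncomputable def psi (t : ℝ) : ℝ :=
  if t ≤ 0 then 0
  else (2 : ℝ) ^ (⌊Real.logb 2 t⌋) * psi0 ((2 : ℝ) ^ (-⌊Real.logb 2 t⌋) * t - 1)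

/-- The map `φ : [0,2] → [0,2]`, `φ t = ψ t` on `[0,1]` and `φ t = ψ (2 - t)` on
`[1,2]`. -/
noncomputable def phi (t : ℝ) : ℝ := if t ≤ 1 then psi t else psi (2 - t)

/-- The level set `φ⁻⁽ⁿ⁺¹⁾(0)` inside `[0,2]` (indexing so that `Z 0 = φ⁻¹(0)`). -/
def Zlevel (n : ℕ) : Set (Set.Icc (0 : ℝ) 2) :=
  {t : Set.Icc (0 : ℝ) 2 | phi^[n + 1] (t : ℝ) = 0}

/-- The norm `|‖f‖| = sup_{n ≥ 1} (1/n!) max_{t ∈ φ⁻ⁿ(0)} |f t|` on `C[0,2]`. -/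
noncomputable def tnorm (f : C(Set.Icc (0 : ℝ) 2, ℝ)) : ℝ :=
  ⨆ n : ℕ, (((n + 1).factorial : ℝ))⁻¹ *
    sSup ((fun t : Set.Icc (0 : ℝ) 2 => |f t|) '' Zlevel n)

open Filter Topology Nat

section Monoid

variable {M : Type*} [Monoid M] [TopologicalSpace M] [ContinuousMul M] [T2Space M] {a q : M}

theorem pow_mul_eq_of_tendsto_pow (h : Tendsto (a ^ ·) atTop (𝓝 q)) (n : ℕ) :
    a ^ n * q = q := by
  refine tendsto_nhds_unique (h.const_mul (a ^ n)) ?_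
  simpa only [Function.comp_def, ← pow_add, add_comm n] using h.comp (tendsto_add_atTop_nat n)

theorem mul_pow_eq_of_tendsto_pow (h : Tendsto (a ^ ·) atTop (𝓝 q)) (n : ℕ) :
    q * a ^ n = q := by
  refine tendsto_nhds_unique (h.mul_const (a ^ n)) ?_
  simpa only [Function.comp_def, ← pow_add] using h.comp (tendsto_add_atTop_nat n)

theorem isIdempotentElem_of_tendsto_pow (h : Tendsto (a ^ ·) atTop (𝓝 q)) :
    IsIdempotentElem q :=
  tendsto_nhds_unique (h.mul_const q)
    (by simp only [pow_mul_eq_of_tendsto_pow h, tendsto_const_nhds])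

end Monoid

theorem sub_pow_succ_of_tendsto_pow {R : Type*} [Ring R] [TopologicalSpace R]
    [IsTopologicalRing R] [T2Space R] {a q : R} (h : Tendsto (a ^ ·) atTop (𝓝 q)) (n : ℕ) :
    (a - q) ^ (n + 1) = a ^ (n + 1) - q := by
  induction n with
  | zero => simp
  | succ n ih =>
    have hqa : q * a = q := by simpa using mul_pow_eq_of_tendsto_pow h 1
    rw [pow_succ, ih, sub_mul, mul_sub, mul_sub, pow_mul_eq_of_tendsto_pow h, ← pow_succ,
      (isIdempotentElem_of_tendsto_pow h).eq, hqa, sub_self, sub_zero]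

theorem spectrum_add_subset_of_mul_eq_zero {𝕜 A : Type*} [Field 𝕜] [Ring A] [Algebra 𝕜 A]
    {a b : A} (h : a * b = 0) :
    spectrum 𝕜 (a + b) ⊆ insert 0 (spectrum 𝕜 a ∪ spectrum 𝕜 b) := by
  intro μ hμ
  by_contra! hμ'
  simp only [Set.mem_insert_iff, Set.mem_union, not_or] at hμ'
  obtain ⟨hμ0, ha, hb⟩ := hμ'
  have hfactor : (algebraMap 𝕜 A μ - a) * (algebraMap 𝕜 A μ - b) =
      Units.mk0 μ hμ0 • (algebraMap 𝕜 A μ - (a + b)) := by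
    rw [Units.smul_mk0, sub_mul, mul_sub, mul_sub, h, ← Algebra.commutes μ a, Algebra.smul_def,
      mul_sub, mul_add]
    abel
  refine spectrum.mem_iff.1 hμ ((isUnit_smul_iff (Units.mk0 μ hμ0) _).mp ?_)
  rw [← hfactor]
  exact (spectrum.notMem_iff.1 ha).mul (spectrum.notMem_iff.1 hb)

theorem isUnit_one_sub_of_summable_pow {R : Type*} [Ring R] [TopologicalSpace R]
    [IsTopologicalRing R] [T2Space R] {x : R} (h : Summable (x ^ ·)) : IsUnit (1 - x) :=
  ⟨⟨1 - x, ∑' n, x ^ n, h.one_sub_mul_tsum_pow, h.tsum_pow_mul_one_sub⟩, rfl⟩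

theorem exists_tendsto_pow_of_norm_pow_sub_pow_le {R : Type*} [NormedRing R] [CompleteSpace R]
    (a : R) {ε : ℕ → ℝ} (hε : Tendsto ε atTop (𝓝 0)) (h : ∀ k m, ‖a ^ k - a ^ m‖ ≤ ε k + ε m) :
    ∃ q, Tendsto (a ^ ·) atTop (𝓝 q) ∧ ∀ k, ‖a ^ k - q‖ ≤ ε k := by
  have hcauchy : CauchySeq (a ^ ·) := by
    refine Metric.cauchySeq_iff'.2 fun δ hδ => ?_
    obtain ⟨N, hN⟩ := (hε.eventually (gt_mem_nhds (half_pos hδ))).exists_forall_of_atTop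
    exact ⟨N, fun n hn => by rw [dist_eq_norm]; linarith [h n N, hN n hn, hN N le_rfl]⟩
  obtain ⟨q, hq⟩ := cauchySeq_tendsto_of_complete hcauchy
  exact ⟨q, hq, fun k => le_of_tendsto_of_tendsto' (tendsto_const_nhds.sub hq).norm
    (by simpa using tendsto_const_nhds.add hε) (h k)⟩

section BanachAlgebra

variable {𝕜 A : Type*} [NontriviallyNormedField 𝕜] [NormedRing A] [NormedAlgebra 𝕜 A]
  [CompleteSpace A]

theorem spectrum_subset_zero_of_norm_pow_le {a : A} {C : ℝ}
    (h : ∀ n, ‖a ^ (n + 1)‖ ≤ C / (n + 1)!) : spectrum 𝕜 a ⊆ {0} := by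
  intro μ hμ
  by_contra hμ0
  have hsum : Summable fun n => (μ⁻¹ • a) ^ n := by
    refine (summable_nat_add_iff 1).mp (Summable.of_norm_bounded
      ((summable_nat_add_iff 1).mpr (Real.summable_pow_div_factorial ‖μ⁻¹‖) |>.mul_left C)
      fun n => ?_)
    calc ‖(μ⁻¹ • a) ^ (n + 1)‖ ≤ ‖μ⁻¹‖ ^ (n + 1) * ‖a ^ (n + 1)‖ := by
          rw [smul_pow, ← norm_pow]; exact norm_smul_le _ _
      _ ≤ ‖μ⁻¹‖ ^ (n + 1) * (C / (n + 1)!) := by gcongr; exact h n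
      _ = C * (‖μ⁻¹‖ ^ (n + 1) / (n + 1)!) := by ring
  have hfactor : algebraMap 𝕜 A μ - a = μ • (1 - μ⁻¹ • a) := by
    rw [smul_sub, smul_smul, mul_inv_cancel₀ hμ0, one_smul, Algebra.algebraMap_eq_smul_one]
  refine spectrum.mem_iff.1 hμ ?_
  rw [hfactor]
  exact (isUnit_smul_iff (Units.mk0 μ hμ0) _).mpr (isUnit_one_sub_of_summable_pow hsum)

theorem spectrum_subset_zero_one_of_tendsto_pow {a q : A} (hq : Tendsto (a ^ ·) atTop (𝓝 q))
    {C : ℝ} (h : ∀ n, ‖a ^ (n + 1) - q‖ ≤ C / (n + 1)!) : spectrum 𝕜 a ⊆ {0, 1} := by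
  have hq_idem := isIdempotentElem_of_tendsto_pow hq
  have hmul : (a - q) * q = 0 := by
    rw [sub_mul, hq_idem.eq, sub_eq_zero]
    simpa using pow_mul_eq_of_tendsto_pow hq 1
  have hN : spectrum 𝕜 (a - q) ⊆ {0} :=
    spectrum_subset_zero_of_norm_pow_le fun n => sub_pow_succ_of_tendsto_pow hq n ▸ h n
  calc spectrum 𝕜 a = spectrum 𝕜 (a - q + q) := by rw [sub_add_cancel]
    _ ⊆ insert 0 (spectrum 𝕜 (a - q) ∪ spectrum 𝕜 q) := spectrum_add_subset_of_mul_eq_zero hmul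
    _ ⊆ {0, 1} := Set.insert_subset (by simp)
        (Set.union_subset (hN.trans (by simp)) (hq_idem.spectrum_subset 𝕜))

end BanachAlgebra

theorem ContinuousLinearMap.mem_spectrum_of_apply_eq_smul {𝕜 E : Type*} [NormedField 𝕜]
    [SeminormedAddCommGroup E] [NormedSpace 𝕜 E] {A : E →L[𝕜] E} {μ : 𝕜} {x : E} (hx : x ≠ 0)
    (h : A x = μ • x) : μ ∈ spectrum 𝕜 A := by
  rintro ⟨u, hu⟩
  apply hx
  calc x = (↑u⁻¹ * ↑u : E →L[𝕜] E) x := by rw [Units.inv_mul]; rfl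
    _ = 0 := by simp [hu, h, Algebra.algebraMap_eq_smul_one]

theorem ContinuousLinearMap.opNorm_le_of_denseRange {𝕜 E F G : Type*}
    [NontriviallyNormedField 𝕜] [SeminormedAddCommGroup E] [NormedSpace 𝕜 E]
    [SeminormedAddCommGroup F] [NormedSpace 𝕜 F] (T : E →L[𝕜] F) {j : G → E}
    (hj : DenseRange j) {C : ℝ} (hC : 0 ≤ C) (h : ∀ g, ‖T (j g)‖ ≤ C * ‖j g‖) : ‖T‖ ≤ C :=
  T.opNorm_le_bound hC fun x => hj.induction_on x
    (isClosed_le (continuous_norm.comp T.continuous) (continuous_const.mul continuous_norm)) h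

theorem tendsto_div_factorial (c : ℝ) : Tendsto (fun k => c / k !) atTop (𝓝 0) := by
  simpa [div_eq_mul_inv] using
    (FloorSemiring.tendsto_pow_div_factorial_atTop (1 : ℝ)).const_mul c

theorem ContinuousMap.iterate_comp_apply {α β : Type*} [TopologicalSpace α]
    [TopologicalSpace β] (e : C(α, α)) (k : ℕ) (f : C(α, β)) (t : α) :
    ((·.comp e)^[k] f) t = f (e^[k] t) := by
  induction k generalizing f with
  | zero => rfl
  | succ k ih => rw [Function.iterate_succ_apply, ih, Function.iterate_succ_apply']; rfl

theorem psi0_le_one (s : ℝ) : psi0 s ≤ 1 := by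
  unfold psi0; split_ifs <;> linarith

theorem psi_le_one {t : ℝ} (ht : t ≤ 1) : psi t ≤ 1 := by
  unfold psi
  split_ifs with h
  · exact zero_le_one
  · have hpow : (2 : ℝ) ^ ⌊Real.logb 2 t⌋ ≤ 1 :=
      zpow_le_one_of_nonpos₀ one_le_two
        (Int.floor_nonpos (Real.logb_nonpos one_lt_two (not_le.1 h).le ht))
    exact (mul_le_of_le_one_right (by positivity) (psi0_le_one _)).trans hpow

theorem phi_le_one (t : ℝ) : phi t ≤ 1 := by
  unfold phi
  split_ifs with h
  · exact psi_le_one h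
  · exact psi_le_one (by linarith)

theorem phi_zero : phi 0 = 0 := by simp [phi, psi]

theorem phi_two : phi 2 = 0 := by norm_num [phi, psi]

def origin : Set.Icc (0 : ℝ) 2 := ⟨0, by norm_num⟩

theorem origin_mem_Zlevel (n : ℕ) : origin ∈ Zlevel n :=
  Function.iterate_fixed phi_zero (n + 1)

theorem two_mem_Zlevel_zero : (⟨2, by norm_num⟩ : Set.Icc (0 : ℝ) 2) ∈ Zlevel 0 := phi_two

section TripleNorm

variable (f : C(Set.Icc (0 : ℝ) 2, ℝ))

theorem bddAbove_abs_image (s : Set (Set.Icc (0 : ℝ) 2)) :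
    BddAbove ((fun t => |f t|) '' s) :=
  ⟨‖f‖, by rintro _ ⟨t, -, rfl⟩; exact f.norm_coe_le_norm t⟩

theorem bddAbove_range_tnorm_terms : BddAbove (Set.range fun n : ℕ =>
    ((n + 1)! : ℝ)⁻¹ * sSup ((fun t => |f t|) '' Zlevel n)) := by
  refine ⟨‖f‖, ?_⟩
  rintro _ ⟨n, rfl⟩
  have hsSup_le : sSup ((fun t => |f t|) '' Zlevel n) ≤ ‖f‖ :=
    Real.sSup_le (by rintro _ ⟨t, -, rfl⟩; exact f.norm_coe_le_norm t) (norm_nonneg f)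
  have hsSup_nonneg : 0 ≤ sSup ((fun t => |f t|) '' Zlevel n) :=
    Real.sSup_nonneg (by rintro _ ⟨t, -, rfl⟩; exact abs_nonneg _)
  exact (mul_le_of_le_one_left hsSup_nonneg
    (inv_le_one_of_one_le₀ (one_le_cast.2 (factorial_pos _)))).trans hsSup_le

theorem abs_le_factorial_mul_tnorm {n : ℕ} {t : Set.Icc (0 : ℝ) 2} (ht : t ∈ Zlevel n) :
    |f t| ≤ (n + 1)! * tnorm f := by
  have hterm := le_ciSup (bddAbove_range_tnorm_terms f) n
  rw [inv_mul_le_iff₀ (by positivity)] at hterm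
  exact (le_csSup (bddAbove_abs_image f _) ⟨t, ht, rfl⟩).trans hterm

theorem tnorm_le_of_abs_le {c : ℝ} (hc : 0 ≤ c)
    (h : ∀ n, ∀ t ∈ Zlevel n, |f t| ≤ (n + 1)! * c) : tnorm f ≤ c :=
  ciSup_le fun n => (inv_mul_le_iff₀ (by positivity)).2 <|
    Real.sSup_le (by rintro _ ⟨t, ht, rfl⟩; exact h n t ht) (by positivity)

theorem tnorm_nonneg : 0 ≤ tnorm f :=
  nonneg_of_mul_nonneg_right
    ((abs_nonneg _).trans (abs_le_factorial_mul_tnorm f (origin_mem_Zlevel 0))) (by positivity)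

theorem tnorm_one : tnorm 1 = 1 := by
  refine le_antisymm (tnorm_le_of_abs_le 1 zero_le_one fun n _ _ => ?_)
    (by simpa using abs_le_factorial_mul_tnorm 1 (origin_mem_Zlevel 0))
  rw [ContinuousMap.one_apply, abs_one, mul_one]
  exact one_le_cast.2 (factorial_pos _)

end TripleNorm

section Dynamics

variable {phic : C(Set.Icc (0 : ℝ) 2, Set.Icc (0 : ℝ) 2)}

theorem coe_iterate_phic (hphic : ∀ t, (phic t : ℝ) = phi t) (k : ℕ)
    (t : Set.Icc (0 : ℝ) 2) : (phic^[k] t : ℝ) = phi^[k] t :=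
  Function.Semiconj.iterate_right (f := Subtype.val) hphic k t

theorem iterate_mem_Zlevel (hphic : ∀ t, (phic t : ℝ) = phi t) {k n : ℕ} (hkn : k ≤ n)
    {t : Set.Icc (0 : ℝ) 2} (ht : t ∈ Zlevel n) : phic^[k] t ∈ Zlevel (n - k) := by
  change phi^[n - k + 1] _ = 0
  rwa [coe_iterate_phic hphic, ← Function.iterate_add_apply, show n - k + 1 + k = n + 1 by omega]

theorem iterate_eq_origin (hphic : ∀ t, (phic t : ℝ) = phi t) {k n : ℕ} (hnk : n < k)
    {t : Set.Icc (0 : ℝ) 2} (ht : t ∈ Zlevel n) : phic^[k] t = origin := by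
  apply Subtype.ext
  rw [coe_iterate_phic hphic, ← Nat.sub_add_cancel hnk, Function.iterate_add_apply,
    show phi^[n + 1] t = 0 from ht]
  exact Function.iterate_fixed phi_zero _

theorem tnorm_iterate_comp_le (hphic : ∀ t, (phic t : ℝ) = phi t)
    {g : C(Set.Icc (0 : ℝ) 2, ℝ)} (hg : g origin = 0) (k : ℕ) :
    tnorm ((·.comp phic)^[k] g) ≤ tnorm g / k ! := by
  have hg_nonneg := tnorm_nonneg g
  refine tnorm_le_of_abs_le _ (by positivity) fun n t ht => ?_
  rw [ContinuousMap.iterate_comp_apply]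
  rcases le_or_gt k n with hkn | hnk
  · have hfact : (n - k + 1)! * k ! ≤ (n + 1)! := by
      have := Nat.le_of_dvd (factorial_pos _)
        (factorial_mul_factorial_dvd_factorial_add (n - k + 1) k)
      rwa [show n - k + 1 + k = n + 1 by omega] at this
    calc |g (phic^[k] t)| ≤ (n - k + 1)! * tnorm g :=
          abs_le_factorial_mul_tnorm g (iterate_mem_Zlevel hphic hkn ht)
      _ ≤ (n + 1)! * (tnorm g / k !) := by
          rw [← mul_div_assoc, le_div_iff₀ (by positivity), mul_right_comm]
          gcongr
          exact_mod_cast hfact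
  · rw [iterate_eq_origin hphic hnk ht, hg, abs_zero]
    positivity

end Dynamics

section CompositionOperator

variable {X : Type*} [NormedAddCommGroup X] [NormedSpace ℝ X]
  {j : C(Set.Icc (0 : ℝ) 2, ℝ) →ₗ[ℝ] X} {phic : C(Set.Icc (0 : ℝ) 2, Set.Icc (0 : ℝ) 2)}
  {A : X →L[ℝ] X}

theorem pow_apply_eq (hA : ∀ f, A (j f) = j (f.comp phic)) (k : ℕ) (f : C(Set.Icc (0 : ℝ) 2, ℝ)) :
    (A ^ k) (j f) = j ((·.comp phic)^[k] f) := by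
  rw [pow_apply_eq_iterate]
  exact (Function.Semiconj.iterate_right (fun f => (hA f).symm) k f).symm

theorem pow_apply_one (hA : ∀ f, A (j f) = j (f.comp phic)) (k : ℕ) : (A ^ k) (j 1) = j 1 := by
  rw [pow_apply_eq hA, Function.iterate_fixed (ContinuousMap.one_comp phic)]

theorem norm_pow_apply_le (hjiso : ∀ f, ‖j f‖ = tnorm f) (hphic : ∀ t, (phic t : ℝ) = phi t)
    (hA : ∀ f, A (j f) = j (f.comp phic)) {g : C(Set.Icc (0 : ℝ) 2, ℝ)} (hg : g origin = 0)
    (k : ℕ) : ‖(A ^ k) (j g)‖ ≤ ‖j g‖ / k ! := by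
  rw [pow_apply_eq hA, hjiso, hjiso]
  exact tnorm_iterate_comp_le hphic hg k

theorem norm_sub_smul_le (hjiso : ∀ f, ‖j f‖ = tnorm f) (f : C(Set.Icc (0 : ℝ) 2, ℝ)) :
    ‖j f - f origin • j 1‖ ≤ 2 * ‖j f‖ := by
  have hf0 : |f origin| ≤ ‖j f‖ := by
    simpa [hjiso] using abs_le_factorial_mul_tnorm f (origin_mem_Zlevel 0)
  calc ‖j f - f origin • j 1‖ ≤ ‖j f‖ + ‖f origin • j 1‖ := norm_sub_le _ _
    _ = ‖j f‖ + |f origin| := by rw [norm_smul, hjiso 1, tnorm_one, mul_one, Real.norm_eq_abs]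
    _ ≤ 2 * ‖j f‖ := by linarith

theorem norm_pow_sub_pow_le (hjiso : ∀ f, ‖j f‖ = tnorm f) (hjdense : DenseRange j)
    (hphic : ∀ t, (phic t : ℝ) = phi t) (hA : ∀ f, A (j f) = j (f.comp phic)) (k m : ℕ) :
    ‖A ^ k - A ^ m‖ ≤ 2 / k ! + 2 / m ! := by
  refine (A ^ k - A ^ m).opNorm_le_of_denseRange hjdense (by positivity) fun f => ?_
  set g := f - f origin • 1
  have hg : g origin = 0 := by simp [g]
  have hjg : j g = j f - f origin • j 1 := by simp [g]
  have hsplit : (A ^ k - A ^ m) (j f) = (A ^ k) (j g) - (A ^ m) (j g) := by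
    simp only [hjg, map_sub, map_smul, pow_apply_one hA, sub_apply]
    abel
  calc ‖(A ^ k - A ^ m) (j f)‖ ≤ ‖j g‖ / k ! + ‖j g‖ / m ! := by
        rw [hsplit]
        exact norm_sub_le_of_le (norm_pow_apply_le hjiso hphic hA hg k)
          (norm_pow_apply_le hjiso hphic hA hg m)
    _ ≤ 2 * ‖j f‖ / k ! + 2 * ‖j f‖ / m ! := by
        rw [hjg]; gcongr <;> exact norm_sub_smul_le hjiso f
    _ = (2 / k ! + 2 / m !) * ‖j f‖ := by ring

theorem tendsto_pow_apply {Q : X →L[ℝ] X} (hQ : Tendsto (A ^ ·) atTop (𝓝 Q)) (x : X) :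
    Tendsto (fun k => (A ^ k) x) atTop (𝓝 (Q x)) :=
  ((ContinuousLinearMap.apply ℝ X x).continuous.tendsto Q).comp hQ

theorem limit_apply_eq (hjiso : ∀ f, ‖j f‖ = tnorm f) (hphic : ∀ t, (phic t : ℝ) = phi t)
    (hA : ∀ f, A (j f) = j (f.comp phic)) {Q : X →L[ℝ] X} (hQ : Tendsto (A ^ ·) atTop (𝓝 Q))
    (f : C(Set.Icc (0 : ℝ) 2, ℝ)) : Q (j f) = f origin • j 1 := by
  set g := f - f origin • 1
  have hg : g origin = 0 := by simp [g]
  have hsmall : Tendsto (fun k => (A ^ k) (j g)) atTop (𝓝 0) :=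
    squeeze_zero_norm (norm_pow_apply_le hjiso hphic hA hg) (tendsto_div_factorial _)
  have hsplit : ∀ k, (A ^ k) (j f) = (A ^ k) (j g) + f origin • j 1 := fun k => by
    simp only [g, map_sub, map_smul, pow_apply_one hA, sub_add_cancel]
  refine tendsto_nhds_unique (tendsto_pow_apply hQ (j f)) ?_
  simpa [hsplit] using hsmall.add_const (f origin • j 1)

theorem exists_eq_smul_of_apply_eq_self (hjiso : ∀ f, ‖j f‖ = tnorm f) (hjdense : DenseRange j)
    (hphic : ∀ t, (phic t : ℝ) = phi t) (hA : ∀ f, A (j f) = j (f.comp phic))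
    {Q : X →L[ℝ] X} (hQ : Tendsto (A ^ ·) atTop (𝓝 Q)) {x : X} (hx : A x = x) :
    ∃ c : ℝ, x = c • j 1 := by
  have hQx : Q x = x := by
    refine tendsto_nhds_unique (tendsto_pow_apply hQ x) ?_
    simp only [pow_apply_eq_iterate, Function.iterate_fixed hx, tendsto_const_nhds]
  have hmem : Q x ∈ closure (ℝ ∙ j 1 : Set X) := by
    refine map_mem_closure Q.continuous (hjdense x) ?_
    rintro _ ⟨f, rfl⟩
    rw [limit_apply_eq hjiso hphic hA hQ]
    exact Submodule.smul_mem _ _ (Submodule.mem_span_singleton_self _)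
  rw [(Submodule.closed_of_finiteDimensional _).closure_eq, SetLike.mem_coe,
    Submodule.mem_span_singleton] at hmem
  obtain ⟨c, hc⟩ := hmem
  exact ⟨c, by rw [hc, hQx]⟩

theorem zero_mem_spectrum (hjiso : ∀ f, ‖j f‖ = tnorm f) (hphic : ∀ t, (phic t : ℝ) = phi t)
    (hA : ∀ f, A (j f) = j (f.comp phic)) : (0 : ℝ) ∈ spectrum ℝ A := by
  set f : C(Set.Icc (0 : ℝ) 2, ℝ) := ⟨fun t => max ((t : ℝ) - 1) 0, by fun_prop⟩
  have hf : f.comp phic = 0 := by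
    ext t
    simp [f, hphic, phi_le_one]
  have hnorm : 1 ≤ ‖j f‖ := by
    have := abs_le_factorial_mul_tnorm f two_mem_Zlevel_zero
    norm_num [f] at this
    rwa [hjiso]
  refine ContinuousLinearMap.mem_spectrum_of_apply_eq_smul (x := j f) ?_ ?_
  · rintro h
    norm_num [h] at hnorm
  · rw [hA, hf, map_zero, zero_smul]

theorem one_mem_spectrum (hjiso : ∀ f, ‖j f‖ = tnorm f) (hA : ∀ f, A (j f) = j (f.comp phic)) :
    (1 : ℝ) ∈ spectrum ℝ A := by
  refine ContinuousLinearMap.mem_spectrum_of_apply_eq_smul (x := j 1) ?_ ?_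
  · rw [← norm_ne_zero_iff, hjiso, tnorm_one]
    exact one_ne_zero
  · rw [hA, ContinuousMap.one_comp, one_smul]

end CompositionOperator

theorem stmt14_general {X : Type*} [NormedAddCommGroup X] [NormedSpace ℝ X]
    [CompleteSpace X]
    (j : C(Set.Icc (0 : ℝ) 2, ℝ) →ₗ[ℝ] X)
    (hjiso : ∀ f, ‖j f‖ = tnorm f)
    (hjdense : DenseRange j)
    (phic : C(Set.Icc (0 : ℝ) 2, Set.Icc (0 : ℝ) 2))
    (hphic : ∀ t : Set.Icc (0 : ℝ) 2, (phic t : ℝ) = phi t)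
    (A : X →L[ℝ] X) (hA : ∀ f, A (j f) = j (f.comp phic)) :
    spectrum ℝ A = {0, 1} ∧
      ∀ x : X, A x = x ↔ ∃ c : ℝ, x = c • j 1 := by
  obtain ⟨Q, hQ, hAQ⟩ := exists_tendsto_pow_of_norm_pow_sub_pow_le A (tendsto_div_factorial 2)
    (norm_pow_sub_pow_le hjiso hjdense hphic hA)
  refine ⟨(spectrum_subset_zero_one_of_tendsto_pow hQ fun n => hAQ (n + 1)).antisymm ?_,
    fun x => ⟨exists_eq_smul_of_apply_eq_self hjiso hjdense hphic hA hQ, ?_⟩⟩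
  · rintro μ (rfl | rfl)
    exacts [zero_mem_spectrum hjiso hphic hA, one_mem_spectrum hjiso hA]
  · rintro ⟨c, rfl⟩
    rw [map_smul, hA, ContinuousMap.one_comp]

/-- Let `X` be the completion of `C[0,2]` in the norm `|‖·‖|` (presented
abstractly via a dense lattice-isometric embedding `j`) and let `A` extend the
composition operator `f ↦ f ∘ φ`.  Then `σ(A) = {0, 1}` and `1` is an
eigenvalue of `A` with one-dimensional eigenspace spanned by `𝟙`. -/
theorem stmt14 {X : Type*} [NormedAddCommGroup X] [Lattice X] [HasSolidNorm X]
    [IsOrderedAddMonoid X] [NormedSpace ℝ X]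
    [CompleteSpace X]
    (j : C(Set.Icc (0 : ℝ) 2, ℝ) →ₗ[ℝ] X)
    (hjiso : ∀ f, ‖j f‖ = tnorm f)
    (hjlat : ∀ f, j |f| = |j f|)
    (hjdense : DenseRange j)
    (phic : C(Set.Icc (0 : ℝ) 2, Set.Icc (0 : ℝ) 2))
    (hphic : ∀ t : Set.Icc (0 : ℝ) 2, (phic t : ℝ) = phi t)
    (A : X →L[ℝ] X) (hA : ∀ f, A (j f) = j (f.comp phic)) :
    spectrum ℝ A = {0, 1} ∧
      ∀ x : X, A x = x ↔ ∃ c : ℝ, x = c • j 1 :=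
  stmt14_general j hjiso hjdense phic hphic A hA
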